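/- arXiv:0907.0741 — 7 statements merged into one kernel-verified Lean document; each statement's English description precedes it below -/
import Mathlib

section
/- For every integer k ≥ 1 and every sequence of positive real numbers p_1, …, p_k with p_1 + ⋯ + p_k = 1, there exist binary strings w_1, …, w_k that are pairwise prefix-incomparable (the family is prefix-free), strictly increasing in lexicographic order (w_1 < w_2 < ⋯ < w_k), and such that for each i the length of w_i is at most ⌈log₂(1/p_i)⌉ + 1. -/
/-!
Shannon–Fano–Elias coding. Cut `[0, 1)` into consecutive intervals `[Sᵢ, Sᵢ + pᵢ)` of lengths
`pᵢ` and take for `wᵢ` the first `Lᵢ = ⌈log₂(1/pᵢ)⌉ + 1` binary digits of the midpoint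
`Sᵢ + pᵢ/2`. Since `2^(-Lᵢ) ≤ pᵢ/2`, the dyadic interval of length `2^(-Lᵢ)` named by `wᵢ` lies
inside `[Sᵢ, Sᵢ + pᵢ)`. These dyadic intervals are therefore disjoint and in the order of the
`i`, and two words whose dyadic intervals are disjoint and ordered first differ at a position where
the left one has a `0` and the right one a `1`.
-/

/-- The `l` low-order binary digits of `m`, most significant first. -/
def binaryWord : ℕ → ℕ → List Bool
  | 0, _ => []
  | l + 1, m => binaryWord l (m / 2) ++ [decide (m % 2 = 1)]

@[simp]
lemma length_binaryWord (l m : ℕ) : (binaryWord l m).length = l := by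
  induction l generalizing m with
  | zero => rfl
  | succ l ih => simp [binaryWord, ih]

lemma binaryWord_add (a b m : ℕ) :
    binaryWord (a + b) m = binaryWord a (m / 2 ^ b) ++ binaryWord b (m % 2 ^ b) := by
  induction b generalizing m with
  | zero => simp [binaryWord]
  | succ b ih =>
    have hdiv : m % 2 ^ (b + 1) / 2 = m / 2 % 2 ^ b := by
      rw [pow_succ', Nat.mod_mul_right_div_self]
    have hmod : m % 2 ^ (b + 1) % 2 = m % 2 := Nat.mod_mod_of_dvd m (dvd_pow_self 2 b.succ_ne_zero)
    rw [← add_assoc, binaryWord, ih, binaryWord, hdiv, hmod, Nat.div_div_eq_div_mul, ← pow_succ',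
      List.append_assoc]

def BranchesBefore (w w' : List Bool) : Prop :=
  ∃ c u v, w = c ++ false :: u ∧ w' = c ++ true :: v

namespace BranchesBefore

variable {w w' : List Bool}

lemma lt (h : BranchesBefore w w') : w < w' := by
  obtain ⟨c, u, v, rfl, rfl⟩ := h
  exact List.append_left_lt (List.cons_lt_cons_iff.2 (Or.inl Bool.false_lt_true))

lemma not_prefix (h : BranchesBefore w w') : ¬ w <+: w' := by
  obtain ⟨c, u, v, rfl, rfl⟩ := h
  simp

lemma not_prefix_symm (h : BranchesBefore w w') : ¬ w' <+: w := by
  obtain ⟨c, u, v, rfl, rfl⟩ := h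
  simp

lemma append (h : BranchesBefore w w') (x y : List Bool) : BranchesBefore (w ++ x) (w' ++ y) := by
  obtain ⟨c, u, v, rfl, rfl⟩ := h
  exact ⟨c, u ++ x, v ++ y, by simp, by simp⟩

end BranchesBefore

lemma branchesBefore_binaryWord_of_lt {l m n : ℕ} (hmn : m < n) (hn : n < 2 ^ l) :
    BranchesBefore (binaryWord l m) (binaryWord l n) := by
  induction l generalizing m n with
  | zero => omega
  | succ l ih =>
    rcases Nat.lt_or_ge (m / 2) (n / 2) with h | h
    · exact (ih h (by omega)).append _ _
    · have hm : m % 2 = 0 := by omega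
      have hn : n % 2 = 1 := by omega
      refine ⟨binaryWord l (m / 2), [], [], ?_, ?_⟩
      · simp [binaryWord, hm]
      · simp [binaryWord, hn, show n / 2 = m / 2 by omega]

/-- The hypothesis says that the dyadic interval `[m / 2^l, (m+1) / 2^l)` lies to the left of
`[n / 2^l', (n+1) / 2^l')`. -/
lemma branchesBefore_binaryWord_of_mul_le {l l' m n : ℕ} (hn : n < 2 ^ l')
    (h : (m + 1) * 2 ^ l' ≤ n * 2 ^ l) :
    BranchesBefore (binaryWord l m) (binaryWord l' n) := by
  rcases Nat.le_total l l' with hl | hl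
  · obtain ⟨b, rfl⟩ := Nat.exists_eq_add_of_le hl
    have hmn : m + 1 ≤ n / 2 ^ b := by
      rw [Nat.le_div_iff_mul_le (by positivity)]
      refine Nat.le_of_mul_le_mul_right ?_ (by positivity : 0 < 2 ^ l)
      rwa [mul_assoc, ← pow_add, add_comm b]
    have hn' : n / 2 ^ b < 2 ^ l := Nat.div_lt_of_lt_mul (by rwa [← pow_add, add_comm b])
    rw [binaryWord_add l b n]
    simpa using (branchesBefore_binaryWord_of_lt hmn hn').append [] (binaryWord b (n % 2 ^ b))
  · obtain ⟨b, rfl⟩ := Nat.exists_eq_add_of_le hl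
    have hmn : m / 2 ^ b < n := by
      rw [Nat.div_lt_iff_lt_mul (by positivity), Nat.lt_iff_add_one_le]
      refine Nat.le_of_mul_le_mul_right ?_ (by positivity : 0 < 2 ^ l')
      rwa [mul_assoc, ← pow_add, add_comm b]
    rw [binaryWord_add l' b m]
    simpa using (branchesBefore_binaryWord_of_lt hmn hn).append (binaryWord b (m % 2 ^ b)) []

lemma floor_add_half_bounds {y q : ℝ} (hy : 0 ≤ y) (hq : 2 ≤ q) :
    y ≤ ⌊y + q / 2⌋₊ ∧ (⌊y + q / 2⌋₊ : ℝ) + 1 ≤ y + q := by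
  constructor
  · linarith [Nat.lt_floor_add_one (y + q / 2)]
  · linarith [Nat.floor_le (by linarith : 0 ≤ y + q / 2)]

noncomputable def codeLength (p : ℝ) : ℕ := Nat.clog 2 ⌈p⁻¹⌉₊ + 1

lemma two_le_mul_two_pow_codeLength {p : ℝ} (hp : 0 < p) : 2 ≤ p * 2 ^ codeLength p := by
  have h : p⁻¹ ≤ 2 ^ Nat.clog 2 ⌈p⁻¹⌉₊ := by
    calc p⁻¹ ≤ ⌈p⁻¹⌉₊ := Nat.le_ceil _
      _ ≤ ((2 ^ Nat.clog 2 ⌈p⁻¹⌉₊ : ℕ) : ℝ) := by exact_mod_cast Nat.le_pow_clog one_lt_two _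
      _ = _ := by push_cast; rfl
  rw [codeLength, pow_succ]
  have := (inv_le_iff_one_le_mul₀' hp).1 h
  nlinarith

lemma codeLength_eq {p : ℝ} (hp0 : 0 < p) (hp1 : p ≤ 1) :
    (codeLength p : ℤ) = ⌈Real.logb 2 (1 / p)⌉ + 1 := by
  have h := Real.ceil_logb_natCast (b := 2) (inv_nonneg.2 hp0.le)
  rw [Int.clog_of_one_le_right _ (one_le_inv_iff₀.2 ⟨hp0, hp1⟩)] at h
  simp only [Nat.cast_ofNat] at h
  rw [codeLength, one_div, h]
  push_cast
  rfl

section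

variable {ι : Type*} [LinearOrder ι] [LocallyFiniteOrderBot ι] (p : ι → ℝ)

def cumSum (i : ι) : ℝ := ∑ t ∈ Finset.Iio i, p t

variable {p}

lemma cumSum_nonneg (hp : ∀ i, 0 ≤ p i) (i : ι) : 0 ≤ cumSum p i :=
  Finset.sum_nonneg fun t _ => hp t

lemma cumSum_add_self_eq_sum_Iic (i : ι) : cumSum p i + p i = ∑ t ∈ Finset.Iic i, p t := by
  rw [← Finset.Iio_insert, Finset.sum_insert Finset.notMem_Iio_self, add_comm, cumSum]

lemma cumSum_add_self_le_cumSum (hp : ∀ i, 0 ≤ p i) {i j : ι} (hij : i < j) :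
    cumSum p i + p i ≤ cumSum p j := by
  rw [cumSum_add_self_eq_sum_Iic]
  exact Finset.sum_le_sum_of_subset_of_nonneg (fun t ht => by simpa using (Finset.mem_Iic.1 ht).trans_lt hij) fun t _ _ => hp t

lemma cumSum_add_self_le_sum [Fintype ι] (hp : ∀ i, 0 ≤ p i) (i : ι) :
    cumSum p i + p i ≤ ∑ t, p t := by
  rw [cumSum_add_self_eq_sum_Iic]
  exact Finset.sum_le_sum_of_subset_of_nonneg (Finset.subset_univ _) fun t _ _ => hp t

variable (p)

noncomputable def dyadicIndex (i : ι) : ℕ :=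
  ⌊cumSum p i * 2 ^ codeLength (p i) + p i * 2 ^ codeLength (p i) / 2⌋₊

noncomputable def gilbertMooreCode (i : ι) : List Bool :=
  binaryWord (codeLength (p i)) (dyadicIndex p i)

variable {p}

lemma dyadicIndex_bounds (hp : ∀ i, 0 < p i) (i : ι) :
    cumSum p i * 2 ^ codeLength (p i) ≤ dyadicIndex p i ∧
      (dyadicIndex p i : ℝ) + 1 ≤ (cumSum p i + p i) * 2 ^ codeLength (p i) := by
  rw [add_mul]
  exact floor_add_half_bounds (by have := cumSum_nonneg (fun i => (hp i).le) i; positivity)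
    (two_le_mul_two_pow_codeLength (hp i))

lemma gilbertMooreCode_branchesBefore [Fintype ι] (hp : ∀ i, 0 < p i) (hsum : ∑ i, p i ≤ 1)
    {i j : ι} (hij : i < j) : BranchesBefore (gilbertMooreCode p i) (gilbertMooreCode p j) := by
  have hp' : ∀ i, 0 ≤ p i := fun i => (hp i).le
  obtain ⟨-, hi⟩ := dyadicIndex_bounds hp i
  obtain ⟨hj, hj'⟩ := dyadicIndex_bounds hp j
  have hpow : ∀ l : ℕ, (0 : ℝ) < 2 ^ l := fun l => by positivity
  have hlt : dyadicIndex p j < 2 ^ codeLength (p j) := by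
    have hj_le_one := (cumSum_add_self_le_sum hp' j).trans hsum
    have : (dyadicIndex p j : ℝ) + 1 ≤ 2 ^ codeLength (p j) := by
      nlinarith [hpow (codeLength (p j))]
    exact_mod_cast this
  refine branchesBefore_binaryWord_of_mul_le hlt ?_
  have hgap := cumSum_add_self_le_cumSum hp' hij
  have : ((dyadicIndex p i : ℝ) + 1) * 2 ^ codeLength (p j) ≤
      dyadicIndex p j * 2 ^ codeLength (p i) := by
    calc ((dyadicIndex p i : ℝ) + 1) * 2 ^ codeLength (p j)
        ≤ cumSum p j * 2 ^ codeLength (p i) * 2 ^ codeLength (p j) := by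
          gcongr
          nlinarith [hpow (codeLength (p i))]
      _ ≤ dyadicIndex p j * 2 ^ codeLength (p i) := by
          rw [mul_right_comm]
          gcongr
  exact_mod_cast this

end

theorem gilbert_moore_general (k : ℕ) (p : Fin k → ℝ)
    (hpos : ∀ i, 0 < p i) (hsum : ∑ i, p i = 1) :
    ∃ w : Fin k → List Bool,
      (∀ i j, i ≠ j → ¬ (w i <+: w j)) ∧
      (∀ i j, i < j → w i < w j) ∧
      (∀ i, ((w i).length : ℤ) ≤ ⌈Real.logb 2 (1 / p i)⌉ + 1) := by
  have hcode {i j} (hij : i < j) := gilbertMooreCode_branchesBefore hpos hsum.le hij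
  refine ⟨gilbertMooreCode p, fun i j hij => ?_, fun i j hij => (hcode hij).lt, fun i => ?_⟩
  · rcases hij.lt_or_gt with h | h
    · exact (hcode h).not_prefix
    · exact (hcode h).not_prefix_symm
  · have hp_le_one : p i ≤ 1 := by
      linarith [cumSum_add_self_le_sum (fun i => (hpos i).le) i,
        cumSum_nonneg (fun i => (hpos i).le) i]
    rw [gilbertMooreCode, length_binaryWord, codeLength_eq (hpos i) hp_le_one]

/-- Gilbert–Moore theorem: given a positive probability distribution `p₁, …, p_k`,
there is a lexicographically increasing prefix-free family of binary strings
`w₁ < ⋯ < w_k` with `|w_i| ≤ ⌈log₂(1/p_i)⌉ + 1`. -/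
theorem gilbert_moore (k : ℕ) (hk : 1 ≤ k) (p : Fin k → ℝ)
    (hpos : ∀ i, 0 < p i) (hsum : ∑ i, p i = 1) :
    ∃ w : Fin k → List Bool,
      (∀ i j, i ≠ j → ¬ (w i <+: w j)) ∧
      (∀ i j, i < j → w i < w j) ∧
      (∀ i, ((w i).length : ℤ) ≤ ⌈Real.logb 2 (1 / p i)⌉ + 1) :=
  gilbert_moore_general k p hpos hsum
end

section
/- For every integer k ≥ 1 and every sequence of positive real numbers p_1, …, p_k with p_1 + ⋯ + p_k = 1, there exist pairwise distinct binary strings w_1, …, w_k such that ν(w_1) < ν(w_2) < ⋯ < ν(w_k) and, for each i, the length of w_i (as a real number) is at most log₂(1/p_i). -/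
/-!
Cut `[0, 1]` into consecutive intervals of lengths `p₁, …, p_k`. An open interval of length
`ℓ` inside `[0, 1]` contains a dyadic rational `c / 2 ^ (m + 1)` with `m = ⌊log₂ (1 / ℓ)⌋`,
and every such rational is `ν w` for a string `w` of length at most `m`. Picking one string per
interval gives strings whose `ν`-values increase with `i`.
-/

open Real Finset

/-- For a binary string `w = (b₁, …, b_m)`, `nu w = Σ_{j=1}^m b_j·2^{−j} + 2^{−(m+1)}`:
the in-order (symmetric) traversal value of the tree node with root-to-node path `w`. -/
noncomputable def nu : List Bool → ℝ
  | [] => 1 / 2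
  | b :: t => (if b then (1 : ℝ) / 2 else 0) + nu t / 2

theorem exists_nu_eq_div_two_pow {m c : ℕ} (hc0 : 0 < c) (hc : c < 2 ^ (m + 1)) :
    ∃ w : List Bool, nu w = c / 2 ^ (m + 1) ∧ w.length ≤ m := by
  induction m generalizing c with
  | zero =>
    obtain rfl : c = 1 := by omega
    exact ⟨[], by norm_num [nu], le_rfl⟩
  | succ m ih =>
    have h2 : (2 : ℝ) ^ (m + 1 + 1) = 2 * 2 ^ (m + 1) := by ring
    rcases lt_trichotomy c (2 ^ (m + 1)) with hlt | rfl | hgt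
    · obtain ⟨w, hw, hlen⟩ := ih hc0 hlt
      refine ⟨false :: w, ?_, by simpa using hlen⟩
      rw [nu, hw, h2]
      simp only [Bool.false_eq_true, if_false]
      field_simp
      ring
    · exact ⟨[], by rw [nu, h2]; push_cast; field_simp, by simp⟩
    · obtain ⟨w, hw, hlen⟩ := ih (c := c - 2 ^ (m + 1)) (by omega) (by omega)
      refine ⟨true :: w, ?_, by simpa using hlen⟩
      rw [nu, hw, h2, Nat.cast_sub hgt.le]
      simp only [if_true]
      push_cast
      field_simp
      ring

theorem exists_natCast_div_mem_Ioo {a ℓ : ℝ} {N : ℕ} (ha : 0 ≤ a) (hN : 1 < N * ℓ) :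
    ∃ c : ℕ, 0 < c ∧ (c : ℝ) / N ∈ Set.Ioo a (a + ℓ) := by
  have hN0 : (0 : ℝ) < N :=
    Nat.cast_pos.2 (Nat.pos_of_ne_zero fun h => by simp [h] at hN; linarith)
  refine ⟨⌊a * N⌋₊ + 1, Nat.succ_pos _, ?_, ?_⟩
  · rw [lt_div_iff₀ hN0]
    exact_mod_cast Nat.lt_floor_add_one (a * N)
  · rw [div_lt_iff₀ hN0]
    push_cast
    nlinarith [Nat.floor_le (mul_nonneg ha hN0.le)]

theorem one_lt_two_pow_floor_logb_succ_mul {ℓ : ℝ} (hℓ : 0 < ℓ) :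
    1 < 2 ^ (⌊logb 2 (1 / ℓ)⌋₊ + 1) * ℓ := by
  have h := (logb_lt_iff_lt_rpow one_lt_two (one_div_pos.mpr hℓ)).mp
    (Nat.lt_floor_add_one (logb 2 (1 / ℓ)))
  rw [← Nat.cast_succ, rpow_natCast, div_lt_iff₀ hℓ] at h
  exact_mod_cast h

theorem exists_nu_mem_Ioo_length_le_logb {a ℓ : ℝ} (ha : 0 ≤ a) (hℓ : 0 < ℓ)
    (hle : a + ℓ ≤ 1) :
    ∃ w : List Bool, nu w ∈ Set.Ioo a (a + ℓ) ∧ (w.length : ℝ) ≤ logb 2 (1 / ℓ) := by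
  set m := ⌊logb 2 (1 / ℓ)⌋₊
  obtain ⟨c, hc0, hc⟩ := exists_natCast_div_mem_Ioo (N := 2 ^ (m + 1)) ha
    (by exact_mod_cast one_lt_two_pow_floor_logb_succ_mul hℓ)
  have hcN : c < 2 ^ (m + 1) := by
    have : (c : ℝ) / (2 ^ (m + 1) : ℕ) < 1 := hc.2.trans_le hle
    rw [div_lt_one (by positivity)] at this
    exact_mod_cast this
  obtain ⟨w, hw, hlen⟩ := exists_nu_eq_div_two_pow hc0 hcN
  refine ⟨w, by rw [hw]; exact_mod_cast hc, ?_⟩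
  have hlogb : 0 ≤ logb 2 (1 / ℓ) :=
    logb_nonneg one_lt_two ((one_le_div hℓ).mpr (by linarith))
  exact (Nat.cast_le.mpr hlen).trans (Nat.floor_le hlogb)

theorem Finset.sum_Iio_add_le_sum_Iio {ι M : Type*} [PartialOrder ι] [LocallyFiniteOrderBot ι]
    [AddCommMonoid M] [PartialOrder M] [IsOrderedAddMonoid M] {f : ι → M}
    (hf : ∀ i, 0 ≤ f i) {i j : ι} (hij : i < j) :
    ∑ x ∈ Iio i, f x + f i ≤ ∑ x ∈ Iio j, f x := by
  rw [sum_Iio_add_eq_sum_Iic]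
  exact sum_le_sum_of_subset_of_nonneg (fun x hx => mem_Iio.2 ((mem_Iic.1 hx).trans_lt hij))
    fun x _ _ => hf x

theorem mehlhorn_weak_general (k : ℕ) (p : Fin k → ℝ)
    (hpos : ∀ i, 0 < p i) (hsum : ∑ i, p i = 1) :
    ∃ w : Fin k → List Bool,
      Function.Injective w ∧
      (∀ i j, i < j → nu (w i) < nu (w j)) ∧
      (∀ i, ((w i).length : ℝ) ≤ Real.logb 2 (1 / p i)) := by
  have hnonneg : ∀ i, 0 ≤ p i := fun i => (hpos i).le
  have hfits : ∀ i, ∑ j ∈ Iio i, p j + p i ≤ 1 := fun i => by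
    rw [sum_Iio_add_eq_sum_Iic, ← hsum]
    exact sum_le_sum_of_subset_of_nonneg (subset_univ _) fun j _ _ => hnonneg j
  choose w hw hlen using fun i =>
    exists_nu_mem_Ioo_length_le_logb (sum_nonneg fun j _ => hnonneg j) (hpos i) (hfits i)
  have hmono : StrictMono (nu ∘ w) := fun i j hij =>
    (hw i).2.trans ((sum_Iio_add_le_sum_Iio hnonneg hij).trans_lt (hw j).1)
  exact ⟨w, hmono.injective.of_comp, fun _ _ hij => hmono hij, hlen⟩

/-- Weak form of Mehlhorn's theorem: given a positive probability distribution
`p₁, …, p_k`, there are pairwise distinct binary strings `w₁, …, w_k` with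
`ν(w₁) < ⋯ < ν(w_k)` and `|w_i| ≤ log₂(1/p_i)`. -/
theorem mehlhorn_weak (k : ℕ) (hk : 1 ≤ k) (p : Fin k → ℝ)
    (hpos : ∀ i, 0 < p i) (hsum : ∑ i, p i = 1) :
    ∃ w : Fin k → List Bool,
      Function.Injective w ∧
      (∀ i j, i < j → nu (w i) < nu (w j)) ∧
      (∀ i, ((w i).length : ℝ) ≤ Real.logb 2 (1 / p i)) :=
  mehlhorn_weak_general k p hpos hsum
end

section
/- Let n ≥ 1 and let c_1, …, c_σ be positive integers with c_1 + ⋯ + c_σ = n, and let H = Σ_{j=1}^σ (c_j/n)·log₂(n/c_j). Then log₂( n! / (c_1!·c_2!·⋯·c_σ!) ) ≥ n·H − σ·log₂(n/σ) − 2σ. -/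
/-!
From `n ^ n / n! ≤ e ^ n` we get `log n! ≥ n log n - n`, and since the Stirling sequence
`k! / (√(2k) (k/e)^k)` decreases from `e / √2` we get
`log c! ≤ c log c - c + (log c) / 2 + 1`. As `∑ c_j = n` the linear terms cancel, so
`log (n! / ∏ c_j!) ≥ (n log n - ∑ c_j log c_j) - ∑ (log c_j) / 2 - σ`, where the first term is
`nH` measured in nats. Concavity of `log` bounds `∑ log c_j` by `σ log (n/σ)`, and the `σ` nats
of error are less than `2σ` bits.
-/

open Real Finset
open scoped Nat

namespace Real

lemma mul_log_sub_le_log_factorial (n : ℕ) : n * log n - n ≤ log n ! := by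
  obtain rfl | hn := eq_or_ne n 0
  · simp
  have hpow : (n : ℝ) ^ n ≤ n ! * exp n :=
    (div_le_iff₀' (by positivity)).1 (pow_div_factorial_le_exp _ (Nat.cast_nonneg n) n)
  have := log_le_log (by positivity) hpow
  rw [log_pow, log_mul (by positivity) (exp_pos _).ne', log_exp] at this
  linarith

-- `stirlingSeq n ≤ stirlingSeq 1 = e / √2`, as the Stirling sequence decreases.
lemma log_factorial_le {n : ℕ} (hn : n ≠ 0) : log n ! ≤ n * log n - n + log n / 2 + 1 := by
  obtain ⟨m, rfl⟩ := Nat.exists_eq_succ_of_ne_zero hn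
  have hanti := Stirling.log_stirlingSeq'_antitone (Nat.zero_le m)
  simp only [Function.comp_apply, Stirling.stirlingSeq_one] at hanti
  rw [Stirling.log_stirlingSeq_formula, log_div (exp_pos 1).ne' (by positivity), log_exp,
    log_sqrt zero_le_two, log_mul two_ne_zero (by positivity),
    log_div (by positivity) (exp_pos 1).ne', log_exp] at hanti
  linarith

lemma sum_log_le_card_mul_log_mean {ι : Type*} (s : Finset ι) {z : ι → ℝ}
    (hz : ∀ i ∈ s, 0 < z i) : ∑ i ∈ s, log (z i) ≤ #s * log ((∑ i ∈ s, z i) / #s) := by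
  obtain rfl | hs := s.eq_empty_or_nonempty
  · simp
  have hcard : (0 : ℝ) < #s := by exact_mod_cast hs.card_pos
  have := strictConcaveOn_log_Ioi.concaveOn.le_map_sum (t := s) (w := fun _ => (#s : ℝ)⁻¹)
    (p := z) (fun _ _ => by positivity) (by simp [hcard.ne']) hz
  simp only [smul_eq_mul, ← mul_sum] at this
  rwa [inv_mul_eq_div, inv_mul_eq_div, div_le_iff₀ hcard, mul_comm] at this

variable {ι : Type*} {s : Finset ι}

lemma mul_sum_div_mul_logb_div {c : ι → ℝ} {n : ℝ} (b : ℝ) (hc : ∀ i ∈ s, c i ≠ 0) (hn : n ≠ 0)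
    (hsum : ∑ i ∈ s, c i = n) :
    n * ∑ i ∈ s, c i / n * logb b (n / c i) = (n * log n - ∑ i ∈ s, c i * log (c i)) / log b := by
  rw [mul_sum, sub_div, sum_div, ← hsum, sum_mul, sum_div, ← sum_sub_distrib, hsum]
  refine sum_congr rfl fun i hi => ?_
  rw [logb, log_div hn (hc i hi)]
  field_simp

lemma le_log_multinomial {c : ι → ℕ} {n : ℕ} (hc : ∀ i ∈ s, c i ≠ 0) (hsum : ∑ i ∈ s, c i = n) :
    n * log n - ∑ i ∈ s, (c i * log (c i) + log (c i) / 2) - #s ≤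
      log (n ! / ∏ i ∈ s, ((c i)! : ℝ)) := by
  have hsum' : ∑ i ∈ s, (c i : ℝ) = n := by exact_mod_cast hsum
  have hupper : ∑ i ∈ s, log (c i)! ≤ ∑ i ∈ s, (c i * log (c i) - c i + log (c i) / 2 + 1) :=
    sum_le_sum fun i hi => log_factorial_le (hc i hi)
  rw [log_div (by positivity) (prod_ne_zero_iff.2 fun i _ => by positivity),
    log_prod fun i _ => by positivity]
  simp only [sum_add_distrib, sum_sub_distrib, hsum', sum_const, nsmul_one] at hupper ⊢
  linarith [mul_log_sub_le_log_factorial n]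

end Real

/-- Lower bound of Lemma 1: `log₂(n!/(c₁!⋯c_σ!)) ≥ nH − σ·log₂(n/σ) − 2σ`, where
`H` is the entropy of the distribution `(c₁/n, …, c_σ/n)`. -/
theorem log_multinomial_lower (n σ : ℕ) (hn : 1 ≤ n) (c : Fin σ → ℕ)
    (hpos : ∀ j, 0 < c j) (hsum : ∑ j, c j = n) (H : ℝ)
    (hH : H = ∑ j, ((c j : ℝ) / n) * Real.logb 2 ((n : ℝ) / (c j))) :
    (n : ℝ) * H - σ * Real.logb 2 ((n : ℝ) / σ) - 2 * σ ≤
      Real.logb 2 ((Nat.factorial n : ℝ) / ∏ j, (Nat.factorial (c j) : ℝ)) := by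
  have hc : ∀ j, (c j : ℝ) ≠ 0 := fun j => by exact_mod_cast (hpos j).ne'
  have hentropy : n * H = (n * log n - ∑ j, c j * log (c j)) / log 2 := by
    rw [hH]
    exact mul_sum_div_mul_logb_div 2 (fun j _ => hc j) (Nat.cast_ne_zero.2 (by omega))
      (by exact_mod_cast hsum)
  have hmultinomial := le_log_multinomial (s := univ) (fun j _ => (hpos j).ne') hsum
  have hmean : ∑ j, log (c j : ℝ) ≤ σ * log (n / σ) := by
    simpa [← Nat.cast_sum, hsum] using
      sum_log_le_card_mul_log_mean univ fun j _ => (Nat.cast_pos.2 (hpos j) : (0 : ℝ) < c j)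
  have hlog_nonneg : 0 ≤ ∑ j, log (c j : ℝ) := sum_nonneg fun j _ => log_natCast_nonneg _
  have hσ_le : (σ : ℝ) ≤ 2 * σ * log 2 := by
    nlinarith [log_two_gt_d9, (Nat.cast_nonneg σ : (0 : ℝ) ≤ σ)]
  have hbound : n * log n - ∑ j, c j * log (c j) - σ * log (n / σ) - 2 * σ * log 2 ≤
      log (n ! / ∏ j, ((c j)! : ℝ)) := by
    simp only [sum_add_distrib, ← sum_div, card_univ, Fintype.card_fin] at hmultinomial
    linarith
  rw [hentropy, logb, logb]
  calc _ = (n * log n - ∑ j, c j * log (c j) - σ * log (n / σ) - 2 * σ * log 2) / log 2 := by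
        field_simp
    _ ≤ _ := div_le_div_of_nonneg_right hbound (log_nonneg one_le_two)
end

section
/- Let S = (s_1, …, s_n) be any finite list over a type with decidable equality. Then the multiset { c_i : 1 ≤ i ≤ n }, where c_i is the number of occurrences of s_i among s_1, …, s_{i−1}, is equal to the multiset union, over the distinct elements a occurring in S, of the multisets {0, 1, …, occ(a, S) − 1}, where occ(a, S) is the number of occurrences of a in S. -/
/-!
Induct on the list from the right. Appending `a` to `l` appends the new count `l.count a` to the
list of previous-occurrence counts, and on the other side it turns the block
`range (l.count a)` of `a` into `range (l.count a + 1)`, which adds the same element `l.count a`.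
-/

namespace List

variable {α : Type*} [DecidableEq α]

/-- The list `(c_1, …, c_n)`; with 0-based `i`, `l.take i` is the part of `l` before `l[i]`. -/
def prevCounts (l : List α) : List ℕ :=
  List.ofFn fun i : Fin l.length => (l.take i.val).count (l.get i)

theorem prevCounts_append_singleton (l : List α) (a : α) :
    prevCounts (l ++ [a]) = prevCounts l ++ [l.count a] := by
  refine List.ext_getElem (by simp [prevCounts]) fun i h _ => ?_
  simp only [prevCounts, length_append, length_cons, length_nil, List.getElem_ofFn, length_ofFn,
    get_eq_getElem] at h ⊢
  rcases Nat.lt_succ_iff_lt_or_eq.mp h with hi | rfl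
  · simp [getElem_append_left, hi, take_append_of_le_length hi.le]
  · simp

theorem range_count_append_singleton (l : List α) (a b : α) :
    Multiset.range ((l ++ [b]).count a) =
      Multiset.range (l.count a) + if b = a then {l.count a} else 0 := by
  split_ifs with h
  · subst h; simp [Multiset.range_succ, ← Multiset.singleton_add, add_comm]
  · simp [h]

theorem sum_range_count_of_toFinset_subset {l : List α} {s : Finset α} (h : l.toFinset ⊆ s) :
    ∑ a ∈ s, Multiset.range (l.count a) = ∑ a ∈ l.toFinset, Multiset.range (l.count a) :=
  (Finset.sum_subset h fun a _ ha => by simp [count_eq_zero.mpr (by simpa using ha)]).symm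

theorem sum_range_count_append_singleton (l : List α) (b : α) :
    ∑ a ∈ (l ++ [b]).toFinset, Multiset.range ((l ++ [b]).count a) =
      ∑ a ∈ l.toFinset, Multiset.range (l.count a) + {l.count b} := by
  simp_rw [range_count_append_singleton, Finset.sum_add_distrib, Finset.sum_ite_eq]
  rw [sum_range_count_of_toFinset_subset (by simp [toFinset_append])]
  simp

end List

/-- The multiset of "number of previous occurrences" counts `c_i` of a list `S`
equals the disjoint union, over the distinct elements `a` of `S`, of
`{0, 1, …, occ(a,S) − 1}`. -/
theorem prev_occurrence_counts_multiset {α : Type*} [DecidableEq α] (S : List α) :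
    (↑(List.ofFn fun i : Fin S.length => (S.take i.val).count (S.get i)) : Multiset ℕ) =
      ∑ a ∈ S.toFinset, Multiset.range (S.count a) := by
  change (S.prevCounts : Multiset ℕ) = _
  induction S using List.reverseRecOn with
  | nil => rfl
  | append_singleton l a ih =>
    rw [List.prevCounts_append_singleton, ← Multiset.coe_add, ih,
      List.sum_range_count_append_singleton, Multiset.coe_singleton]
end

section
/- Let S = (s_1, …, s_n) be any finite list over a type with decidable equality, and for 1 ≤ i ≤ n let c_i be the number of occurrences of s_i among s_1, …, s_{i−1}. Then ∏_{i=1}^n max(c_i, 1) = ∏_a (occ(a, S) − 1)!, where the right-hand product ranges over the distinct elements a occurring in S and occ(a, S) is the number of occurrences of a in S. -/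
/-!
Induction on the list from the right. Appending `x` to `T` multiplies the left side by
`max k 1`, where `k = occ(x, T)`, and replaces the factor `(k - 1)!` on the right by `k!`;
these agree because `k! = max k 1 * (k - 1)!`, which also covers a new element (`k = 0`).
-/

open Nat

theorem factorial_eq_max_one_mul_factorial_sub_one (n : ℕ) : n ! = max n 1 * (n - 1)! := by
  cases n <;> simp [factorial_succ]

theorem prod_fin_take_get_append_singleton {α M : Type*} [CommMonoid M] (f : List α → α → M)
    (T : List α) (x : α) :
    ∏ i : Fin (T ++ [x]).length, f ((T ++ [x]).take i.val) ((T ++ [x]).get i) =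
      (∏ i : Fin T.length, f (T.take i.val) (T.get i)) * f T x := by
  have hlen : T.length + 1 = (T ++ [x]).length := by simp
  rw [← Fin.prod_congr' _ hlen, Fin.prod_univ_castSucc]
  congr 1
  · refine Fintype.prod_congr _ _ fun i => ?_
    simp [List.take_append_of_le_length i.isLt.le, List.getElem_append_left i.isLt]
  · simp

theorem prod_factorial_count_sub_one_eq_of_subset {α : Type*} [DecidableEq α] {S : List α}
    {s : Finset α} (h : S.toFinset ⊆ s) :
    ∏ a ∈ S.toFinset, (S.count a - 1)! = ∏ a ∈ s, (S.count a - 1)! :=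
  Finset.prod_subset h fun a _ ha => by
    simp [List.count_eq_zero_of_not_mem (List.mem_toFinset.not.mp ha)]

theorem prod_factorial_count_sub_one_append_singleton {α : Type*} [DecidableEq α]
    (T : List α) (x : α) :
    ∏ a ∈ (T ++ [x]).toFinset, ((T ++ [x]).count a - 1)! =
      (∏ a ∈ T.toFinset, (T.count a - 1)!) * max (T.count x) 1 := by
  set s := (T ++ [x]).toFinset
  have hx : x ∈ s := by simp [s]
  have hpoint (a : α) : ((T ++ [x]).count a - 1)! =
      (T.count a - 1)! * if a = x then max (T.count x) 1 else 1 := by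
    by_cases hax : a = x
    · subst hax
      simp [List.count_append, mul_comm, ← factorial_eq_max_one_mul_factorial_sub_one]
    · simp [List.count_append, Ne.symm hax, hax]
  rw [prod_factorial_count_sub_one_eq_of_subset (S := T) (s := s) (by simp [s]),
    Finset.prod_congr rfl fun a _ => hpoint a, Finset.prod_mul_distrib, Finset.prod_ite_eq',
    if_pos hx]

/-- `∏_{i=1}^n max(c_i, 1) = ∏_a (occ(a,S) − 1)!`, where `c_i` is the number of
occurrences of `s_i` among `s₁, …, s_{i−1}` and the right-hand product ranges over
the distinct elements of `S`. -/
theorem prod_prev_occurrence_counts {α : Type*} [DecidableEq α] (S : List α) :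
    ∏ i : Fin S.length, max ((S.take i.val).count (S.get i)) 1 =
      ∏ a ∈ S.toFinset, Nat.factorial (S.count a - 1) := by
  induction S using List.reverseRecOn with
  | nil => simp
  | append_singleton T x ih =>
    rw [prod_fin_take_get_append_singleton (fun l a => max (l.count a) 1), ih,
      prod_factorial_count_sub_one_append_singleton]
end

section
/- Let S = (s_1, …, s_n) with n ≥ 2 be a list over a type with decidable equality having exactly σ distinct elements, let occ(a, S) be the number of occurrences of a in S, let H = Σ_a (occ(a,S)/n)·log₂(n/occ(a,S)) (sum over the distinct elements a of S), and for 2 ≤ i ≤ n let c_i be the number of occurrences of s_i among s_1, …, s_{i−1}. Then Σ_{i=2}^n ( log₂((i−1)/max(c_i, 1)) + 1 ) ≤ n·H + n + (σ + 1)·(log₂ n + 2). -/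
/-!
Grouping the positions by the element they hold, `Σ_i log₂ max(c_i, 1)` becomes
`Σ_a log₂ (occ(a,S) - 1)!`, while `Σ_{i<n} log₂ max(i, 1) = log₂ (n - 1)!`. The term `k = m`
of the multinomial expansion of `(Σ_a m_a)^n`, with `m_a = occ(a,S)`, gives
`n! · Π_a m_a^{m_a} ≤ n^n · Π_a m_a!`, i.e. the multinomial coefficient is at most `2^{nH}`.
Passing to the shifted factorials costs `Σ_a log₂ m_a - log₂ n ≤ (σ - 1) log₂ n`.
-/

open Finset
open scoped Nat

theorem List.sum_count_take_eq_sum_toFinset {α M : Type*} [DecidableEq α] [AddCommMonoid M]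
    (f : ℕ → M) (S : List α) :
    ∑ i : Fin S.length, f ((S.take i).count (S.get i)) =
      ∑ a ∈ S.toFinset, ∑ k ∈ Finset.range (S.count a), f k := by
  induction S using List.reverseRecOn with
  | nil => simp
  | append_singleton T b ih =>
    have hlen : (T ++ [b]).length = T.length + 1 := by simp
    have hstep (a : α) : ∑ k ∈ Finset.range ((T ++ [b]).count a), f k =
        (∑ k ∈ Finset.range (T.count a), f k) + if a = b then f (T.count a) else 0 := by
      by_cases h : a = b <;> simp [h, Ne.symm, Finset.sum_range_succ]
    rw [← Fin.sum_congr' _ hlen.symm, Fin.sum_univ_castSucc]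
    simp only [List.get_eq_getElem] at ih ⊢
    simp only [Fin.val_cast, Fin.val_castSucc, Fin.val_last, Fin.is_lt, List.take_left,
      List.take_append_of_le_length, List.getElem_append_left, le_of_lt, List.getElem_concat_length]
    rw [ih, List.toFinset_append, List.toFinset_cons, List.toFinset_nil, insert_empty_eq,
      union_comm, ← Finset.insert_eq, sum_subset (Finset.subset_insert b T.toFinset)
        fun a _ ha => by simp [List.count_eq_zero.mpr (by simpa using ha)],
      sum_congr rfl fun a _ => hstep a, sum_add_distrib, sum_ite_eq',
      if_pos (Finset.mem_insert_self b _)]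

theorem Nat.multinomial_mul_prod_pow_self_le {ι : Type*} [DecidableEq ι] (s : Finset ι)
    (m : ι → ℕ) :
    multinomial s m * ∏ i ∈ s, m i ^ m i ≤ (∑ i ∈ s, m i) ^ ∑ i ∈ s, m i := by
  set m' : ι → ℕ := fun i => if i ∈ s then m i else 0
  have hm' : ∀ i ∈ s, m i = m' i := fun i hi => (if_pos hi).symm
  have hmem : m' ∈ s.piAntidiag (∑ i ∈ s, m i) :=
    mem_piAntidiag.2 ⟨(sum_congr rfl hm').symm, fun i hi => by by_contra h; simp [m', h] at hi⟩
  rw [sum_pow_eq_sum_piAntidiag, multinomial_congr hm',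
    prod_congr rfl fun i hi => congrArg (m i ^ ·) (hm' i hi)]
  exact single_le_sum (f := fun k => multinomial s k * ∏ i ∈ s, m i ^ k i)
    (fun _ _ => Nat.zero_le _) hmem

-- Also valid for `k = 0`, where `logb b 0 = 0` and `0 - 1 = 0`.
theorem Real.logb_natCast_factorial (b : ℝ) (k : ℕ) :
    logb b (k ! : ℝ) = logb b k + logb b ((k - 1)! : ℝ) := by
  cases k with
  | zero => simp
  | succ k => rw [Nat.factorial_succ, Nat.cast_mul, logb_mul (by positivity) (by positivity)]; simp

theorem sum_range_logb_max_one (b : ℝ) (m : ℕ) :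
    ∑ k ∈ range m, Real.logb b ((max k 1 : ℕ) : ℝ) = Real.logb b ((m - 1)! : ℝ) := by
  induction m with
  | zero => simp
  | succ m ih =>
    rw [sum_range_succ, ih, Nat.add_sub_cancel, Real.logb_natCast_factorial b m, add_comm]
    rcases Nat.eq_zero_or_pos m with rfl | hm
    · simp
    · rw [max_eq_left hm]

theorem sum_mul_logb_div_eq {ι : Type*} (s : Finset ι) (m : ι → ℕ) {n : ℕ}
    (hn : ∑ i ∈ s, m i = n) (b : ℝ) :
    ∑ i ∈ s, (m i : ℝ) * Real.logb b (n / m i) =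
      n * Real.logb b n - ∑ i ∈ s, m i * Real.logb b (m i) := by
  have hterm : ∀ i ∈ s, (m i : ℝ) * Real.logb b (n / m i) =
      m i * Real.logb b n - m i * Real.logb b (m i) := by
    intro i hi
    rcases Nat.eq_zero_or_pos (m i) with h | h
    · simp [h]
    have hle : m i ≤ n := hn ▸ single_le_sum (fun _ _ => Nat.zero_le _) hi
    rw [Real.logb_div (Nat.cast_ne_zero.2 (by omega)) (by positivity), mul_sub]
  rw [sum_congr rfl hterm, sum_sub_distrib, ← sum_mul, ← Nat.cast_sum, hn]

theorem logb_factorial_pred_sub_sum_le {ι : Type*} [DecidableEq ι] (s : Finset ι)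
    (m : ι → ℕ) {n : ℕ} (hn : ∑ i ∈ s, m i = n) {b : ℝ} (hb : 1 < b) :
    Real.logb b ((n - 1)! : ℝ) - ∑ i ∈ s, Real.logb b ((m i - 1)! : ℝ) ≤
      ∑ i ∈ s, (m i : ℝ) * Real.logb b (n / m i) + ∑ i ∈ s, Real.logb b (m i) -
        Real.logb b n := by
  have hpow (k : ℕ) : (k : ℝ) ^ k ≠ 0 := by exact_mod_cast Nat.pow_self_pos.ne'
  have hfac :
      (n ! : ℝ) * ∏ i ∈ s, (m i : ℝ) ^ m i ≤ n ^ n * ∏ i ∈ s, ((m i)! : ℝ) := by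
    have hnat : n ! * ∏ i ∈ s, m i ^ m i ≤ n ^ n * ∏ i ∈ s, (m i)! := by
      rw [← hn, ← Nat.multinomial_spec s m, mul_assoc, mul_comm ((∑ i ∈ s, m i) ^ _)]
      exact Nat.mul_le_mul_left _ (Nat.multinomial_mul_prod_pow_self_le s m)
    exact_mod_cast hnat
  have hlog := Real.logb_le_logb_of_le hb
    (mul_pos (by positivity) (prod_pos fun i _ => (hpow (m i)).lt_of_le' (by positivity))) hfac
  rw [Real.logb_mul (by positivity) (prod_ne_zero_iff.2 fun i _ => hpow (m i)),
    Real.logb_mul (hpow n) (prod_ne_zero_iff.2 fun i _ => by positivity),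
    Real.logb_prod _ _ fun i _ => hpow (m i), Real.logb_prod _ _ fun i _ => by positivity,
    Real.logb_pow, Real.logb_natCast_factorial] at hlog
  simp only [Real.logb_pow, Real.logb_natCast_factorial b (m _), sum_add_distrib] at hlog
  linarith [sum_mul_logb_div_eq s m hn b]

theorem List.sum_logb_count_le {α : Type*} [DecidableEq α] (S : List α) {b : ℝ} (hb : 1 < b) :
    ∑ a ∈ S.toFinset, Real.logb b (S.count a) ≤ S.toFinset.card * Real.logb b S.length := by
  rw [← nsmul_eq_mul]
  refine Finset.sum_le_card_nsmul _ _ _ fun a ha => Real.logb_le_logb_of_le hb ?_ ?_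
  · exact_mod_cast List.count_pos_iff.2 (List.mem_toFinset.1 ha)
  · exact_mod_cast List.count_le_length

theorem List.length_mul_sum_count_div_mul_logb {α : Type*} [DecidableEq α] (S : List α)
    (b : ℝ) :
    S.length * ∑ a ∈ S.toFinset,
        ((S.count a : ℝ) / S.length) * Real.logb b (S.length / S.count a) =
      ∑ a ∈ S.toFinset, (S.count a : ℝ) * Real.logb b (S.length / S.count a) := by
  rw [mul_sum]
  refine sum_congr rfl fun a ha => ?_
  have hlen : (S.length : ℝ) ≠ 0 :=
    Nat.cast_ne_zero.2 (List.length_pos_of_mem (List.mem_toFinset.1 ha)).ne'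
  rw [← mul_assoc, mul_div_cancel₀ _ hlen]

theorem online_ternary_comparison_bound_general {α : Type*} [DecidableEq α] (S : List α)
    (n σ : ℕ) (hn : n = S.length) (hσ : σ = S.toFinset.card) (H : ℝ)
    (hH : H = ∑ a ∈ S.toFinset,
      ((S.count a : ℝ) / n) * Real.logb 2 ((n : ℝ) / (S.count a))) :
    (∑ i : Fin S.length, if i.val = 0 then (0 : ℝ) else
        Real.logb 2 ((i.val : ℝ) /
          ((max ((S.take i.val).count (S.get i)) 1 : ℕ) : ℝ)) + 1) ≤
      n * H + n + (σ + 1) * (Real.logb 2 n + 2) := by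
  subst hn hσ hH
  set c : Fin S.length → ℕ := fun i => (S.take i).count (S.get i)
  have hterm (i : Fin S.length) : (if i.val = 0 then (0 : ℝ) else
      Real.logb 2 ((i.val : ℝ) / ((max (c i) 1 : ℕ) : ℝ)) + 1) ≤
      Real.logb 2 ((max i.val 1 : ℕ) : ℝ) - Real.logb 2 ((max (c i) 1 : ℕ) : ℝ) + 1 := by
    split_ifs with h
    · simp [c, h]
    · rw [max_eq_left (Nat.one_le_iff_ne_zero.2 h), Real.logb_div (by positivity) (by positivity)]
  have hpositions : ∑ i : Fin S.length, Real.logb 2 ((max i.val 1 : ℕ) : ℝ) =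
      Real.logb 2 ((S.length - 1)! : ℝ) := by
    rw [Fin.sum_univ_eq_sum_range (fun i => Real.logb 2 ((max i 1 : ℕ) : ℝ)),
      sum_range_logb_max_one]
  have hprevious : ∑ i, Real.logb 2 ((max (c i) 1 : ℕ) : ℝ) =
      ∑ a ∈ S.toFinset, Real.logb 2 ((S.count a - 1)! : ℝ) :=
    (S.sum_count_take_eq_sum_toFinset fun k => Real.logb 2 ((max k 1 : ℕ) : ℝ)).trans
      (sum_congr rfl fun a _ => sum_range_logb_max_one 2 _)
  have hmultinomial := logb_factorial_pred_sub_sum_le S.toFinset S.count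
    S.sum_toFinset_count_eq_length one_lt_two
  have hcounts := S.sum_logb_count_le one_lt_two
  have hentropy := S.length_mul_sum_count_div_mul_logb 2
  have hlogn : 0 ≤ Real.logb 2 S.length := div_nonneg (Real.log_natCast_nonneg _) (by positivity)
  calc _ ≤ _ := sum_le_sum fun i _ => hterm i
    _ = Real.logb 2 ((S.length - 1)! : ℝ) -
          ∑ a ∈ S.toFinset, Real.logb 2 ((S.count a - 1)! : ℝ) + S.length := by
      rw [sum_add_distrib, sum_sub_distrib, hpositions, hprevious]
      simp
    _ ≤ _ := by nlinarith

/-- Theorem 5 (comparison count): the total number of ternary comparisons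
`Σ_{i=2}^n (log₂((i−1)/max(c_i,1)) + 1)` used by the online stable sorting
algorithm is at most `nH + n + (σ+1)(log₂ n + 2)`.  Here the sum is written over
zero-based positions `i` of `S` (the position-`0` term, corresponding to the first
element, is zero), `c` is the number of previous occurrences of the current
element, `σ` is the number of distinct elements and `H` is the entropy of the
distribution of the elements of `S`. -/
theorem online_ternary_comparison_bound {α : Type*} [DecidableEq α] (S : List α)
    (n σ : ℕ) (hn : n = S.length) (hn2 : 2 ≤ n) (hσ : σ = S.toFinset.card) (H : ℝ)
    (hH : H = ∑ a ∈ S.toFinset,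
      ((S.count a : ℝ) / n) * Real.logb 2 ((n : ℝ) / (S.count a))) :
    (∑ i : Fin S.length, if i.val = 0 then (0 : ℝ) else
        Real.logb 2 ((i.val : ℝ) /
          ((max ((S.take i.val).count (S.get i)) 1 : ℕ) : ℝ)) + 1) ≤
      n * H + n + (σ + 1) * (Real.logb 2 n + 2) :=
  online_ternary_comparison_bound_general S n σ hn hσ H hH
end

section
/- Let k = 2^t for some natural number t, and let C be a prefix-free set of exactly 2k+1 binary strings satisfying the Kraft equality Σ_{w ∈ C} 2^{−|w|} = 1, where |w| is the length of w. List the elements of C in increasing lexicographic order as u_1 < u_2 < ⋯ < u_{2k+1}. Then there exists an index i with 1 ≤ i ≤ k such that the even-indexed string u_{2i} has length |u_{2i}| ≥ log₂ k + 2 (= t + 2). -/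
namespace EvenLeafDeepAux

/-- `N L v` is the left endpoint (scaled by `2^L`) of the dyadic interval of `v`. -/
def N : ℕ → List Bool → ℕ
  | _, [] => 0
  | L, b :: v => (cond b (2^(L-1)) 0) + N (L-1) v

lemma N_bound : ∀ (v : List Bool) (L : ℕ), v.length ≤ L →
    N L v + 2^(L - v.length) ≤ 2^L := by
  intro v
  induction v with
  | nil => intro L _; simp [N]
  | cons b v ih =>
    intro L hL
    simp only [List.length_cons] at hL
    have h1 : 1 ≤ L := by omega
    have h2 := ih (L-1) (by omega)
    have hp : (2:ℕ)^(L-1) + 2^(L-1) = 2^L := by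
      rw [← two_mul, ← pow_succ']
      congr 1; omega
    show (cond b (2^(L-1)) 0) + N (L-1) v + 2^(L - (b :: v).length) ≤ 2^L
    rw [show L - (b :: v).length = (L-1) - v.length by simp; omega]
    cases b
    · simp only [cond, Nat.zero_add]
      calc N (L-1) v + 2^((L-1) - v.length) ≤ 2^(L-1) := h2
        _ ≤ 2^L := Nat.pow_le_pow_right (by norm_num) (by omega)
    · simp only [cond]
      calc 2^(L-1) + N (L-1) v + 2^((L-1) - v.length)
          = 2^(L-1) + (N (L-1) v + 2^((L-1) - v.length)) := by ring
        _ ≤ 2^(L-1) + 2^(L-1) := Nat.add_le_add_left h2 _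
        _ = 2^L := hp

lemma N_dvd : ∀ (v : List Bool) (L d : ℕ), v.length + d ≤ L → 2^d ∣ N L v := by
  intro v
  induction v with
  | nil => intro L d _; simp [N]
  | cons b v ih =>
    intro L d h
    simp only [List.length_cons] at h
    have h1 : 2^d ∣ N (L-1) v := ih (L-1) d (by omega)
    have h2 : (2:ℕ)^d ∣ 2^(L-1) := pow_dvd_pow 2 (by omega)
    show 2^d ∣ (cond b (2^(L-1)) 0) + N (L-1) v
    cases b <;> simp only [cond, zero_add]
    · exact h1
    · exact dvd_add h2 h1

lemma N_order : ∀ (v w : List Bool), List.Lex (· < ·) v w → ¬ v <+: w →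
    ∀ L, v.length ≤ L → w.length ≤ L → N L v + 2^(L - v.length) ≤ N L w := by
  intro v w h
  induction h with
  | nil => intro hp _ _ _; exact absurd List.nil_prefix hp
  | @cons a l₁ l₂ h ih =>
    intro hp L hv hw
    simp only [List.length_cons] at hv hw
    have hp' : ¬ l₁ <+: l₂ := fun hh => hp (List.cons_prefix_cons.mpr ⟨rfl, hh⟩)
    have hih := ih hp' (L-1) (by omega) (by omega)
    show (cond a (2^(L-1)) 0) + N (L-1) l₁ + 2^(L - (a :: l₁).length)
        ≤ (cond a (2^(L-1)) 0) + N (L-1) l₂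
    rw [show L - (a :: l₁).length = (L-1) - l₁.length by simp; omega]
    have hh : (cond a (2^(L-1)) 0) + (N (L-1) l₁ + 2^((L-1) - l₁.length))
        ≤ (cond a (2^(L-1)) 0) + N (L-1) l₂ := Nat.add_le_add_left hih _
    omega
  | @rel a l₁ b l₂ h =>
    intro _ L hv hw
    simp only [List.length_cons] at hv hw
    obtain ⟨ha, hb⟩ := Bool.lt_iff.mp h
    subst ha; subst hb
    have h1 := N_bound l₁ (L-1) (by omega)
    show (cond false (2^(L-1)) 0) + N (L-1) l₁ + 2^(L - (false :: l₁).length)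
        ≤ (cond true (2^(L-1)) 0) + N (L-1) l₂
    rw [show L - (false :: l₁).length = (L-1) - l₁.length by simp; omega]
    simp only [cond, Nat.zero_add]
    calc N (L-1) l₁ + 2^((L-1) - l₁.length) ≤ 2^(L-1) := by
          have := N_bound l₁ (L-1) (by omega)
          omega
      _ ≤ 2^(L-1) + N (L-1) l₂ := Nat.le_add_right _ _

end EvenLeafDeepAux

open EvenLeafDeepAux in
/-- Kernel of the lower bound of Theorem 4: if `k = 2^t` and `C` is a prefix-free
set of `2k+1` binary strings with Kraft sum `1` (the leaves of a full binary tree),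
listed in increasing lexicographic order as `u₁ < ⋯ < u_{2k+1}`, then some
even-indexed string `u_{2i}` has length at least `log₂ k + 2 = t + 2`. -/
theorem even_leaf_deep (t k : ℕ) (hk : k = 2 ^ t) (C : Finset (List Bool))
    (hcard : C.card = 2 * k + 1)
    (hpf : ∀ w ∈ C, ∀ w' ∈ C, w ≠ w' → ¬ (w <+: w'))
    (hkraft : ∑ w ∈ C, (2 : ℝ) ^ (-(w.length : ℤ)) = 1)
    (u : Fin (2 * k + 1) → List Bool)
    (hmono : ∀ i j, i < j → u i < u j)
    (hmem : ∀ j, u j ∈ C) :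
    ∃ i : Fin k, t + 2 ≤ (u ⟨2 * i.val + 1, by have := i.isLt; omega⟩).length := by
  by_contra hcon
  push_neg at hcon
  -- u is injective, and its image is C
  have hne : ∀ i j : Fin (2*k+1), i ≠ j → u i ≠ u j := by
    intro i j hij heq
    rcases lt_or_gt_of_ne hij with h | h
    · exact absurd (heq ▸ hmono i j h) (lt_irrefl _)
    · exact absurd (heq ▸ hmono j i h) (lt_irrefl _)
  have hinj : Function.Injective u := fun i j h => by
    by_contra hij; exact hne i j hij h
  have himg : Finset.image u Finset.univ = C := by
    apply Finset.eq_of_subset_of_card_le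
    · intro w hw
      obtain ⟨j, _, rfl⟩ := Finset.mem_image.mp hw
      exact hmem j
    · rw [Finset.card_image_of_injective _ hinj, Finset.card_univ, Fintype.card_fin, hcard]
  -- the scale L
  obtain ⟨L, hL1, hLw⟩ : ∃ L : ℕ, t + 1 ≤ L ∧ ∀ w ∈ C, w.length ≤ L :=
    ⟨max (t + 1) (C.sup List.length), le_max_left _ _,
      fun w hw => le_trans (Finset.le_sup hw) (le_max_right _ _)⟩
  -- sequence over ℕ
  obtain ⟨U, hUeq⟩ : ∃ U : ℕ → List Bool, ∀ (j : ℕ) (h : j < 2*k+1), U j = u ⟨j, h⟩ :=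
    ⟨fun j => if h : j < 2*k+1 then u ⟨j, h⟩ else [], by intro j h; simp [h]⟩
  have hUmem : ∀ j, j < 2*k+1 → U j ∈ C := by
    intro j h; rw [hUeq j h]; exact hmem _
  have hUlen : ∀ j, j < 2*k+1 → (U j).length ≤ L := fun j h => hLw _ (hUmem j h)
  -- integer Kraft equality
  have hsum : ∑ j ∈ Finset.range (2*k+1), 2 ^ (L - (U j).length) = 2 ^ L := by
    have hcast : ((∑ j ∈ Finset.range (2*k+1), 2 ^ (L - (U j).length) : ℕ) : ℝ)
        = ((2:ℝ)^L) := by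
      push_cast
      have hterm : ∀ j ∈ Finset.range (2*k+1), ((2:ℝ)) ^ (L - (U j).length)
          = (2:ℝ)^L * (2:ℝ) ^ (-(((U j).length : ℕ) : ℤ)) := by
        intro j hj
        rw [Finset.mem_range] at hj
        have hlen := hUlen j hj
        have he : ((2:ℝ)) ^ (L - (U j).length)
            = (2:ℝ) ^ ((L : ℤ) - ((U j).length : ℤ)) := by
          rw [← zpow_natCast]
          congr 1
          omega
        rw [he, zpow_sub₀ (by norm_num), zpow_natCast, zpow_neg, zpow_natCast]
        ring
      rw [Finset.sum_congr rfl hterm, ← Finset.mul_sum]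
      have hsC : ∑ j ∈ Finset.range (2*k+1), (2:ℝ) ^ (-(((U j).length : ℕ) : ℤ)) = 1 := by
        rw [← hkraft, ← himg, Finset.sum_image (fun a _ b _ h => hinj h)]
        rw [← Fin.sum_univ_eq_sum_range (fun j => (2:ℝ) ^ (-(((U j).length : ℕ) : ℤ)))]
        apply Finset.sum_congr rfl
        intro i _
        rw [hUeq i.val i.isLt]
      rw [hsC, mul_one]
    have : ((∑ j ∈ Finset.range (2*k+1), 2 ^ (L - (U j).length) : ℕ) : ℝ)
        = (((2:ℕ) ^ L : ℕ) : ℝ) := by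
      rw [hcast]; push_cast; ring
    exact_mod_cast this
  -- consecutive order
  have hstep : ∀ j, j + 1 < 2*k+1 →
      N L (U j) + 2 ^ (L - (U j).length) ≤ N L (U (j+1)) := by
    intro j hj
    have hj' : j < 2*k+1 := by omega
    rw [hUeq j hj', hUeq (j+1) hj]
    have hlt : u ⟨j, hj'⟩ < u ⟨j+1, hj⟩ := hmono _ _ (Fin.mk_lt_mk.mpr (by omega))
    have hneq : u ⟨j, hj'⟩ ≠ u ⟨j+1, hj⟩ := hne _ _ (fun h => by
      have := Fin.mk.injEq .. ▸ h
      omega)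
    have hnpf : ¬ (u ⟨j, hj'⟩ <+: u ⟨j+1, hj⟩) := hpf _ (hmem _) _ (hmem _) hneq
    exact N_order _ _ hlt hnpf L (hLw _ (hmem _)) (hLw _ (hmem _))
  -- lower bound: partial sums ≤ N
  have hlow : ∀ j, j < 2*k+1 →
      ∑ i ∈ Finset.range j, 2 ^ (L - (U i).length) ≤ N L (U j) := by
    intro j
    induction j with
    | zero => intro _; simp
    | succ j ih =>
      intro hj
      rw [Finset.sum_range_succ]
      have h1 := ih (by omega)
      have h2 := hstep j hj
      omega
  -- upper bound with tail
  have hupp : ∀ m, m ≤ 2 * k →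
      N L (U (2*k - m)) + ∑ i ∈ Finset.Ico (2*k - m) (2*k+1), 2 ^ (L - (U i).length)
        ≤ 2 ^ L := by
    intro m
    induction m with
    | zero =>
      intro _
      simp only [Nat.sub_zero]
      have hI : Finset.Ico (2*k) (2*k+1) = {2*k} := Nat.Ico_succ_singleton _
      rw [hI, Finset.sum_singleton]
      exact N_bound (U (2*k)) L (hUlen (2*k) (by omega))
    | succ m ih =>
      intro hm
      have hj : 2*k - (m+1) + 1 = 2*k - m := by omega
      have h1 := ih (by omega)
      have h2 : N L (U (2*k - (m+1))) + 2 ^ (L - (U (2*k - (m+1))).length)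
          ≤ N L (U (2*k - m)) := by
        have := hstep (2*k - (m+1)) (by omega)
        rwa [hj] at this
      have hsp : ∑ i ∈ Finset.Ico (2*k - (m+1)) (2*k+1), 2 ^ (L - (U i).length)
          = 2 ^ (L - (U (2*k - (m+1))).length)
            + ∑ i ∈ Finset.Ico (2*k - m) (2*k+1), 2 ^ (L - (U i).length) := by
        rw [Finset.sum_eq_sum_Ico_succ_bot (show 2*k - (m+1) < 2*k+1 by omega)
          (fun i => 2 ^ (L - (U i).length)), hj]
      omega
  -- exact tiling
  have htile : ∀ j, j < 2*k+1 →
      N L (U j) = ∑ i ∈ Finset.range j, 2 ^ (L - (U i).length) := by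
    intro j hj
    have h1 := hlow j hj
    have h2 : N L (U j) + ∑ i ∈ Finset.Ico j (2*k+1), 2 ^ (L - (U i).length) ≤ 2 ^ L := by
      have := hupp (2*k - j) (by omega)
      rwa [show 2*k - (2*k - j) = j by omega] at this
    have h3 : ∑ i ∈ Finset.range j, 2 ^ (L - (U i).length)
        + ∑ i ∈ Finset.Ico j (2*k+1), 2 ^ (L - (U i).length) = 2 ^ L := by
      rw [Finset.range_eq_Ico,
        Finset.sum_Ico_consecutive _ (by omega) (by omega : j ≤ 2*k+1),
        ← Finset.range_eq_Ico]
      exact hsum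
    omega
  -- divisibility by g = 2^(L-(t+1))
  have hodd_len : ∀ i, i < k → (U (2*i+1)).length ≤ t + 1 := by
    intro i hi
    have h2 : 2*i+1 < 2*k+1 := by omega
    rw [hUeq _ h2]
    have h := hcon ⟨i, hi⟩
    exact Nat.lt_succ_iff.mp h
  have hodd_dvd_nn : ∀ i, i < k → 2^(L-(t+1)) ∣ 2 ^ (L - (U (2*i+1)).length) := by
    intro i hi
    exact pow_dvd_pow 2 (by have := hodd_len i hi; omega)
  have hodd_dvd_NN : ∀ i, i < k → 2^(L-(t+1)) ∣ N L (U (2*i+1)) := by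
    intro i hi
    exact N_dvd _ L (L - (t+1)) (by have := hodd_len i hi; omega)
  have hNN_dvd : ∀ j, j < 2*k+1 → 2^(L-(t+1)) ∣ N L (U j) := by
    intro j hj
    rcases Nat.even_or_odd j with ⟨i, hi⟩ | ⟨i, hi⟩
    · rcases Nat.eq_zero_or_pos i with rfl | hip
      · have h0 : N L (U 0) = 0 := by rw [htile 0 (by omega)]; simp
        have hj0 : j = 0 := by omega
        rw [hj0, h0]
        exact dvd_zero _
      · have hj1 : 2*(i-1)+1 < 2*k+1 := by omega
        have heq : N L (U j) = N L (U (2*(i-1)+1)) + 2 ^ (L - (U (2*(i-1)+1)).length) := by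
          have e : j = (2*(i-1)+1) + 1 := by omega
          rw [e, htile _ (by omega), Finset.sum_range_succ, ← htile _ hj1]
        rw [heq]
        exact dvd_add (hodd_dvd_NN (i-1) (by omega)) (hodd_dvd_nn (i-1) (by omega))
    · rw [hi]
      exact hodd_dvd_NN i (by omega)
  -- every interval has length ≥ g
  have hglb : ∀ j, j < 2*k+1 → 2^(L-(t+1)) ≤ 2 ^ (L - (U j).length) := by
    intro j hj
    have hpos : 1 ≤ 2 ^ (L - (U j).length) := Nat.one_le_two_pow
    have hd : 2^(L-(t+1)) ∣ 2 ^ (L - (U j).length) := by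
      rcases Nat.lt_or_ge (j+1) (2*k+1) with hj1 | hj1
      · have e : 2 ^ (L - (U j).length) = N L (U (j+1)) - N L (U j) := by
          rw [htile _ hj1, htile _ hj, Finset.sum_range_succ]
          omega
        rw [e]
        exact Nat.dvd_sub (hNN_dvd _ hj1) (hNN_dvd _ hj)
      · have e : 2 ^ (L - (U j).length) = 2 ^ L - N L (U j) := by
          have h3 : N L (U j) + 2 ^ (L - (U j).length) = 2 ^ L := by
            rw [htile _ hj, ← Finset.sum_range_succ, show j + 1 = 2*k+1 by omega]
            exact hsum
          omega
        rw [e]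
        exact Nat.dvd_sub (pow_dvd_pow 2 (by omega)) (hNN_dvd _ hj)
    exact Nat.le_of_dvd (by omega) hd
  -- final contradiction
  have htot : (2*k+1) * 2^(L-(t+1)) ≤ 2 ^ L := by
    calc (2*k+1) * 2^(L-(t+1)) = ∑ _j ∈ Finset.range (2*k+1), 2^(L-(t+1)) := by
          rw [Finset.sum_const, Finset.card_range, smul_eq_mul]
      _ ≤ ∑ j ∈ Finset.range (2*k+1), 2 ^ (L - (U j).length) :=
          Finset.sum_le_sum (fun j hj => hglb j (Finset.mem_range.mp hj))
      _ = 2 ^ L := hsum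
  have hKg : (2*k+1) * 2^(L-(t+1)) = 2 ^ L + 2^(L-(t+1)) := by
    have h1 : (2:ℕ) ^ (t+1) * 2^(L-(t+1)) = 2 ^ L := by
      rw [← pow_add]
      congr 1
      omega
    have h2 : 2*k+1 = 2 ^ (t+1) + 1 := by
      rw [hk]; ring
    rw [h2, add_mul, one_mul, h1]
  have hgpos : 1 ≤ (2:ℕ)^(L-(t+1)) := Nat.one_le_two_pow
  rw [hKg] at htot
  omega
end
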